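/- arXiv:2402.09788 — 3 statements merged into one kernel-verified Lean document; each statement's English description precedes it below -/
import Mathlib

section
/- If f₀ : ℝ → ℝ is a 2π-periodic probability density on [-π,π) that is symmetric about zero (f₀(-θ) = f₀(θ)), then for every λ ∈ [-1,1] and nonnegative integer m, the function θ ↦ 2 f₀(θ) G_m(λ sin θ) is a probability density on [-π,π), i.e., ∫_{-π}^{π} 2 f₀(θ) G_m(λ sin θ) dθ = 1. -/
open Real MeasureTheory intervalIntegral

/-- Normalizing constant `C_m = Γ(2(m+1)) / (2^{2m+1} Γ(m+1)^2)`. -/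
noncomputable def Cm (m : ℕ) : ℝ :=
  Real.Gamma (2 * (m + 1)) / (2 ^ (2 * m + 1) * Real.Gamma (m + 1) ^ 2)

/-- The density `g_m(x) = C_m (1 - x^2)^m`. -/
noncomputable def gm (m : ℕ) (x : ℝ) : ℝ := Cm m * (1 - x ^ 2) ^ m

/-- The distribution function `G_m(x) = ∫_{-1}^x g_m`. -/
noncomputable def Gm (m : ℕ) (x : ℝ) : ℝ := ∫ t in (-1 : ℝ)..x, gm m t

lemma prod_eq (m : ℕ) :
    (2 : ℝ) * ∏ i ∈ Finset.range m, (2 * (i : ℝ) + 2) / (2 * i + 3)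
      = 2 ^ (2 * m + 1) * (m.factorial : ℝ) ^ 2 / (2 * m + 1).factorial := by
  induction m with
  | zero => norm_num
  | succ k ih =>
    rw [Finset.prod_range_succ, ← mul_assoc, ih]
    have h1 : (2 * (k + 1) + 1) = (2 * k + 1) + 2 := by ring
    rw [h1]
    have hfact : (((2 * k + 1) + 2).factorial : ℝ)
        = (2 * k + 3) * ((2 * k + 2) * ((2 * k + 1).factorial : ℝ)) := by
      rw [show (2 * k + 1) + 2 = ((2 * k + 1) + 1) + 1 from rfl, Nat.factorial_succ,
        Nat.factorial_succ]
      push_cast; ring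
    have hfact2 : ((k + 1).factorial : ℝ) = (k + 1) * (k.factorial : ℝ) := by
      rw [Nat.factorial_succ]; push_cast; ring
    rw [hfact, hfact2]
    have h2 : ((2 * k + 1).factorial : ℝ) ≠ 0 := Nat.cast_ne_zero.2 (Nat.factorial_ne_zero _)
    have h3 : ((k).factorial : ℝ) ≠ 0 := Nat.cast_ne_zero.2 (Nat.factorial_ne_zero _)
    have h4 : (2 * (k:ℝ) + 3) ≠ 0 := by positivity
    have h5 : (2 * (k:ℝ) + 2) ≠ 0 := by positivity
    field_simp
    ring

lemma base_integral (m : ℕ) :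
    (∫ x in (-1 : ℝ)..1, (1 - x ^ 2) ^ m)
      = 2 ^ (2 * m + 1) * (m.factorial : ℝ) ^ 2 / (2 * m + 1).factorial := by
  have hsub : (∫ u in (-(π/2) : ℝ)..(π/2), (1 - Real.sin u ^ 2) ^ m * Real.cos u)
      = ∫ x in (-1 : ℝ)..1, (1 - x ^ 2) ^ m := by
    have := intervalIntegral.integral_comp_mul_deriv
      (f := Real.sin) (f' := Real.cos) (g := fun x => (1 - x ^ 2) ^ m)
      (a := -(π/2)) (b := π/2)
      (fun x _ => Real.hasDerivAt_sin x) (Real.continuous_cos.continuousOn)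
      (by fun_prop)
    simpa using this
  have hcos : ∀ u : ℝ, (1 - Real.sin u ^ 2) ^ m * Real.cos u = Real.cos u ^ (2 * m + 1) := by
    intro u
    have : 1 - Real.sin u ^ 2 = Real.cos u ^ 2 := by
      have := Real.sin_sq_add_cos_sq u; linarith
    rw [this, ← pow_mul, mul_comm 2 m, pow_succ, mul_comm m 2]
  have hshift : (∫ u in (-(π/2) : ℝ)..(π/2), Real.cos u ^ (2 * m + 1))
      = ∫ x in (0:ℝ)..π, Real.sin x ^ (2 * m + 1) := by
    have : (∫ x in (0:ℝ)..π, Real.sin x ^ (2 * m + 1))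
        = ∫ x in (0:ℝ)..π, Real.cos (x - π/2) ^ (2 * m + 1) := by
      congr 1; ext x; rw [Real.cos_sub_pi_div_two]
    rw [this, intervalIntegral.integral_comp_sub_right (fun u => Real.cos u ^ (2*m+1)) (π/2)]
    congr 1 <;> ring
  rw [← hsub]
  simp_rw [hcos]
  rw [hshift, integral_sin_pow_odd, prod_eq]

lemma Cm_pos_val (m : ℕ) : Cm m * (2 ^ (2 * m + 1) * (m.factorial : ℝ) ^ 2 / (2 * m + 1).factorial) = 1 := by
  unfold Cm
  have h1 : (2 : ℝ) * ((m : ℝ) + 1) = ((2 * m + 1 : ℕ) : ℝ) + 1 := by push_cast; ring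
  rw [h1, Real.Gamma_nat_eq_factorial, Real.Gamma_nat_eq_factorial]
  have hf : ((2 * m + 1).factorial : ℝ) ≠ 0 := Nat.cast_ne_zero.2 (Nat.factorial_ne_zero _)
  have hg : ((m).factorial : ℝ) ≠ 0 := Nat.cast_ne_zero.2 (Nat.factorial_ne_zero _)
  field_simp

lemma gm_total (m : ℕ) : (∫ t in (-1 : ℝ)..1, gm m t) = 1 := by
  unfold gm
  rw [intervalIntegral.integral_const_mul, base_integral, Cm_pos_val]

lemma gm_cont (m : ℕ) : Continuous (gm m) := by unfold gm; fun_prop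

lemma Gm_neg (m : ℕ) (y : ℝ) : Gm m (-y) = 1 - Gm m y := by
  have hI : ∀ a b : ℝ, IntervalIntegrable (gm m) volume a b :=
    fun a b => (gm_cont m).intervalIntegrable a b
  have heven : ∀ t : ℝ, gm m (-t) = gm m t := by intro t; unfold gm; ring_nf
  have h1 : Gm m (-y) = ∫ t in y..(1:ℝ), gm m t := by
    unfold Gm
    rw [show (∫ t in (-1:ℝ)..(-y), gm m t) = ∫ t in (-1:ℝ)..(-y), gm m (-t) by
      simp_rw [heven]]
    rw [intervalIntegral.integral_comp_neg]
    norm_num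
  have hsplit : (∫ t in (-1:ℝ)..y, gm m t) + (∫ t in y..(1:ℝ), gm m t) = 1 := by
    rw [intervalIntegral.integral_add_adjacent_intervals (hI (-1) y) (hI y 1)]
    exact gm_total m
  rw [h1]
  unfold Gm
  linarith

lemma Gm_continuous (m : ℕ) : Continuous (Gm m) :=
  intervalIntegral.continuous_primitive (fun a b => (gm_cont m).intervalIntegrable a b) _

/-- The extended sine-skewed density integrates to one. -/
theorem ess_integral_eq_one (m : ℕ) (f₀ : ℝ → ℝ) (lam : ℝ)
    (hlam : lam ∈ Set.Icc (-1 : ℝ) 1)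
    (hper : Function.Periodic f₀ (2 * π))
    (hsym : ∀ θ, f₀ (-θ) = f₀ θ)
    (hpos : ∀ θ, 0 ≤ f₀ θ)
    (hmeas : Measurable f₀)
    (hint : IntervalIntegrable f₀ MeasureTheory.volume (-π) π)
    (hdens : ∫ θ in (-π)..π, f₀ θ = 1) :
    ∫ θ in (-π)..π, 2 * f₀ θ * Gm m (lam * Real.sin θ) = 1 := by
  set h : ℝ → ℝ := fun θ => 2 * f₀ θ * Gm m (lam * Real.sin θ) with hh
  have hcontG : Continuous fun θ => Gm m (lam * Real.sin θ) :=
    (Gm_continuous m).comp (by fun_prop)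
  have h2int : IntervalIntegrable (fun θ => 2 * f₀ θ) volume (-π) π := by
    simpa [mul_comm] using hint.const_mul 2
  have hih : IntervalIntegrable h volume (-π) π := by
    apply IntervalIntegrable.mul_continuousOn h2int hcontG.continuousOn
  have hpt : ∀ θ, h (-θ) = 2 * f₀ θ - h θ := by
    intro θ
    simp only [hh]
    rw [hsym, Real.sin_neg, mul_neg, Gm_neg]
    ring
  have hneg : (∫ θ in (-π)..π, h (-θ)) = ∫ θ in (-π)..π, h θ := by
    rw [intervalIntegral.integral_comp_neg]
    norm_num
  simp_rw [hpt] at hneg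
  rw [intervalIntegral.integral_sub h2int hih, intervalIntegral.integral_const_mul, hdens]
    at hneg
  show (∫ θ in (-π)..π, h θ) = 1
  linarith
end

section
/- For the extended sine-skewed wrapped Cauchy distribution of order 1 with μ = 0, the p-th sine moment equals β_p = (3/16)(λ³ − 4λ)(ρ^{|p+1|} − ρ^{|p−1|}) − (λ³/16)(ρ^{|p+3|} − ρ^{|p−3|}) for every integer p. -/
/-!
The wrapped Cauchy density is the Poisson kernel of the unit disc at `ρ` divided by `2π`, so by
the Poisson integral formula applied to `z ↦ zⁿ` its cosine moments are `ρ^|n|`; its sine moments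
vanish because it is even. The density `f` is the wrapped Cauchy density times
`2 G₁(λ sin θ) = 1 + (3λ/2 - 3λ³/8) sin θ + (λ³/8) sin 3θ`, and
`2 sin(pθ) sin(kθ) = cos((p - k)θ) - cos((p + k)θ)`, so `β_p` is a combination of four cosine
moments of the base.
-/

open Real intervalIntegral

theorem Function.Odd.intervalIntegral_neg_eq_zero {E : Type*} [NormedAddCommGroup E]
    [NormedSpace ℝ E] {f : ℝ → E} (hf : f.Odd) (a : ℝ) : ∫ x in -a..a, f x = 0 := by
  have h := integral_comp_neg (a := -a) (b := a) f
  simp only [neg_neg, hf _, integral_neg] at h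
  have h2 : (2 : ℝ) • ∫ x in -a..a, f x = 0 := by
    rw [two_smul]; nth_rewrite 1 [← h]; exact neg_add_cancel _
  exact (smul_eq_zero.mp h2).resolve_left two_ne_zero

section PoissonKernel

variable {ρ : ℝ}

lemma one_add_sq_sub_two_mul_cos_pos (hρ : |ρ| < 1) (θ : ℝ) :
    0 < 1 + ρ ^ 2 - 2 * ρ * cos θ := by
  have h : ρ * cos θ ≤ |ρ| :=
    calc ρ * cos θ ≤ |ρ * cos θ| := le_abs_self _
      _ ≤ |ρ| := by
        rw [abs_mul]; exact mul_le_of_le_one_right (abs_nonneg ρ) (abs_cos_le_one θ)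
  nlinarith [sq_abs ρ]

lemma poissonKernel_zero_circleMap_one (ρ θ : ℝ) :
    poissonKernel 0 ρ (circleMap 0 1 θ) = (1 - ρ ^ 2) / (1 + ρ ^ 2 - 2 * ρ * cos θ) := by
  simp only [poissonKernel, sub_zero, circleMap_zero, Complex.ofReal_one, one_mul,
    Complex.norm_exp_ofReal_mul_I, Complex.norm_real, Real.norm_eq_abs, sq_abs, Complex.sq_norm,
    Complex.normSq_apply, Complex.sub_re, Complex.sub_im, Complex.exp_ofReal_mul_I_re,
    Complex.exp_ofReal_mul_I_im, Complex.ofReal_re, Complex.ofReal_im]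
  congr 1
  · norm_num
  · nlinarith [sin_sq_add_cos_sq θ]

lemma continuous_poissonKernel_circle (hρ : |ρ| < 1) :
    Continuous fun θ => (1 - ρ ^ 2) / (1 + ρ ^ 2 - 2 * ρ * cos θ) :=
  continuous_const.div (by fun_prop) fun θ => (one_add_sq_sub_two_mul_cos_pos hρ θ).ne'

theorem integral_cos_mul_poissonKernel_circle (hρ : |ρ| < 1) (n : ℕ) :
    ∫ θ in (-π)..π, cos (n * θ) * ((1 - ρ ^ 2) / (1 + ρ ^ 2 - 2 * ρ * cos θ))
      = 2 * π * ρ ^ n := by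
  set P := fun θ : ℝ => (1 - ρ ^ 2) / (1 + ρ ^ 2 - 2 * ρ * cos θ) with hP
  set F := fun θ : ℝ => (P θ : ℂ) * Complex.exp ((n * θ : ℝ) * Complex.I) with hF
  have hpoisson : circleAverage (poissonKernel 0 ρ • fun z : ℂ => z ^ n) 0 1 = (ρ : ℂ) ^ n :=
    (Differentiable.diffContOnCl (by fun_prop)).circleAverage_poissonKernel_smul
      (by simpa using hρ)
  have hcircle : ∀ θ, (poissonKernel 0 ρ • fun z : ℂ => z ^ n) (circleMap 0 1 θ) = F θ := by
    intro θ
    rw [Pi.smul_apply', poissonKernel_zero_circleMap_one, circleMap_zero, Complex.ofReal_one,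
      one_mul, Complex.real_smul, ← Complex.exp_nat_mul]
    simp only [hF, hP]; push_cast; ring_nf
  have hperiodic : ∫ θ in (-π)..π, F θ = ∫ θ in 0..2 * π, F θ := by
    have := ((periodic_circleMap 0 1).comp (poissonKernel 0 ρ • fun z : ℂ => z ^ n)
      ).intervalIntegral_add_eq (-π) 0
    simpa only [Function.comp_def, hcircle, show -π + 2 * π = π by ring, zero_add] using this
  have hFint : IntervalIntegrable F MeasureTheory.volume (-π) π := by
    have := continuous_poissonKernel_circle hρ
    exact Continuous.intervalIntegrable (by fun_prop) _ _
  have hre : ∀ θ, cos (n * θ) * P θ = (F θ).re := fun θ => by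
    rw [hF, Complex.re_ofReal_mul, Complex.exp_ofReal_mul_I_re, mul_comm]
  have hintegral : ∫ θ in (-π)..π, cos (n * θ) * P θ = (∫ θ in (-π)..π, F θ).re := by
    simp only [hre]
    exact intervalIntegral_re hFint
  have := congrArg Complex.re hpoisson
  simp only [circleAverage_def, hcircle, ← hperiodic, Complex.smul_re, ← hintegral,
    ← Complex.ofReal_pow, Complex.ofReal_re, smul_eq_mul] at this
  rw [← this, mul_inv_cancel_left₀ (by positivity)]

end PoissonKernel

section WrappedCauchy

noncomputable def wrappedCauchyPDF (ρ θ : ℝ) : ℝ :=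
  (1 - ρ ^ 2) / (2 * π * (1 + ρ ^ 2 - 2 * ρ * cos θ))

variable {ρ : ℝ}

lemma wrappedCauchyPDF_eq (ρ θ : ℝ) :
    wrappedCauchyPDF ρ θ = (2 * π)⁻¹ * ((1 - ρ ^ 2) / (1 + ρ ^ 2 - 2 * ρ * cos θ)) := by
  rw [wrappedCauchyPDF, mul_div_assoc', inv_mul_eq_div, div_div]

lemma continuous_wrappedCauchyPDF (hρ : |ρ| < 1) : Continuous (wrappedCauchyPDF ρ) := by
  have := continuous_poissonKernel_circle hρ
  simp_rw [funext (wrappedCauchyPDF_eq ρ)]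
  fun_prop

theorem integral_cos_mul_wrappedCauchyPDF (hρ : |ρ| < 1) (n : ℤ) :
    ∫ θ in (-π)..π, cos (n * θ) * wrappedCauchyPDF ρ θ = ρ ^ n.natAbs := by
  have hcos : ∀ θ : ℝ, cos (n * θ) = cos (n.natAbs * θ) := by
    intro θ
    rw [Nat.cast_natAbs, Int.cast_abs]
    rcases abs_choice (n : ℝ) with h | h <;> simp [h]
  simp_rw [hcos, wrappedCauchyPDF_eq, mul_left_comm _ (2 * π)⁻¹, integral_const_mul,
    integral_cos_mul_poissonKernel_circle hρ]
  field_simp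

theorem integral_sin_mul_wrappedCauchyPDF (ρ x : ℝ) :
    ∫ θ in (-π)..π, sin (x * θ) * wrappedCauchyPDF ρ θ = 0 :=
  Function.Odd.intervalIntegral_neg_eq_zero
    (fun θ => by simp only [wrappedCauchyPDF, mul_neg, sin_neg, cos_neg, neg_mul]) π

theorem integral_sin_mul_sin_mul_wrappedCauchyPDF (hρ : |ρ| < 1) (p k : ℤ) :
    ∫ θ in (-π)..π, sin (p * θ) * sin (k * θ) * wrappedCauchyPDF ρ θ
      = (ρ ^ (p - k).natAbs - ρ ^ (p + k).natAbs) / 2 := by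
  have hprod : ∀ θ : ℝ, sin (p * θ) * sin (k * θ) * wrappedCauchyPDF ρ θ
      = (cos ((p - k : ℤ) * θ) * wrappedCauchyPDF ρ θ
          - cos ((p + k : ℤ) * θ) * wrappedCauchyPDF ρ θ) / 2 := by
    intro θ
    rw [show ((p - k : ℤ) : ℝ) * θ = p * θ - k * θ by push_cast; ring,
      show ((p + k : ℤ) : ℝ) * θ = p * θ + k * θ by push_cast; ring, cos_sub, cos_add]
    ring
  have hc := continuous_wrappedCauchyPDF hρ
  simp_rw [hprod]
  rw [intervalIntegral.integral_div, integral_sub, integral_cos_mul_wrappedCauchyPDF hρ,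
    integral_cos_mul_wrappedCauchyPDF hρ]
  all_goals exact Continuous.intervalIntegrable (by fun_prop) _ _

end WrappedCauchy

theorem essWC1_sine_moment_general (ρ lam : ℝ) (hρ : ρ ∈ Set.Ioo (0 : ℝ) 1) (p : ℤ) :
    (∫ θ in (-π)..π,
        Real.sin (p * θ) *
          ((1 - ρ ^ 2) / (π * (1 + ρ ^ 2 - 2 * ρ * Real.cos θ))
            * ((-(lam * Real.sin θ) ^ 3 + 3 * (lam * Real.sin θ) + 2) / 4)))
      = (3 / 16) * (lam ^ 3 - 4 * lam) * (ρ ^ (p + 1).natAbs - ρ ^ (p - 1).natAbs)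
        - (lam ^ 3 / 16) * (ρ ^ (p + 3).natAbs - ρ ^ (p - 3).natAbs) := by
  have hρ' : |ρ| < 1 := by rw [abs_of_pos hρ.1]; exact hρ.2
  have hexpand : ∀ θ : ℝ, sin (p * θ) * ((1 - ρ ^ 2) / (π * (1 + ρ ^ 2 - 2 * ρ * cos θ))
        * ((-(lam * sin θ) ^ 3 + 3 * (lam * sin θ) + 2) / 4))
      = sin (p * θ) * wrappedCauchyPDF ρ θ
        + (3 * lam / 2 - 3 * lam ^ 3 / 8) * (sin (p * θ) * sin ((1 : ℤ) * θ) * wrappedCauchyPDF ρ θ)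
        + lam ^ 3 / 8 * (sin (p * θ) * sin ((3 : ℤ) * θ) * wrappedCauchyPDF ρ θ) := by
    intro θ
    have := one_add_sq_sub_two_mul_cos_pos hρ' θ
    push_cast
    rw [one_mul, sin_three_mul, wrappedCauchyPDF]
    field_simp
    ring
  have hc := continuous_wrappedCauchyPDF hρ'
  rw [integral_congr fun θ _ => hexpand θ, integral_add, integral_add, integral_const_mul,
    integral_const_mul, integral_sin_mul_wrappedCauchyPDF,
    integral_sin_mul_sin_mul_wrappedCauchyPDF hρ', integral_sin_mul_sin_mul_wrappedCauchyPDF hρ']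
  · ring
  all_goals exact Continuous.intervalIntegrable (by fun_prop) _ _

/-- `p`-th sine moment of the extended sine-skewed wrapped Cauchy distribution of order 1. -/
theorem essWC1_sine_moment (ρ lam : ℝ) (hρ : ρ ∈ Set.Ioo (0 : ℝ) 1)
    (hlam : lam ∈ Set.Icc (-1 : ℝ) 1) (p : ℤ) :
    (∫ θ in (-π)..π,
        Real.sin (p * θ) *
          ((1 - ρ ^ 2) / (π * (1 + ρ ^ 2 - 2 * ρ * Real.cos θ))
            * ((-(lam * Real.sin θ) ^ 3 + 3 * (lam * Real.sin θ) + 2) / 4)))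
      = (3 / 16) * (lam ^ 3 - 4 * lam) * (ρ ^ (p + 1).natAbs - ρ ^ (p - 1).natAbs)
        - (lam ^ 3 / 16) * (ρ ^ (p + 3).natAbs - ρ ^ (p - 3).natAbs) :=
  essWC1_sine_moment_general ρ lam hρ p
end

section
/- For the extended sine-skewed von Mises density of order m, all third-order partial derivatives of the log-likelihood contribution θ ↦ log(2 G_m(λ sin(θ−μ))) with respect to (μ, λ) are uniformly bounded when λ is restricted to [−1+δ, 1−δ] for fixed δ ∈ (0,1): each such derivative is bounded in absolute value by a constant depending only on m and δ, uniformly over θ ∈ ℝ, μ ∈ ℝ, λ ∈ [−1+δ, 1−δ]. -/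
open Real MeasureTheory intervalIntegral

/-! The third derivatives are continuous on the open set `λ ∈ (-1, 1)`, where `G_m(λ sin(θ - μ))`
stays positive, hence bounded on the compact set `[0, 2π] × [-1 + δ, 1 - δ]`. Translation in `θ`
and `2π`-periodicity in `μ` move every point `(μ, λ)` into that set without changing the
derivatives. -/

open scoped ContDiff

lemma Cm_pos (m : ℕ) : 0 < Cm m :=
  div_pos (Real.Gamma_pos_of_pos (by positivity)) (by positivity)

lemma contDiff_gm (m : ℕ) : ContDiff ℝ ∞ (gm m) := by
  unfold gm
  fun_prop

lemma hasDerivAt_Gm (m : ℕ) (x : ℝ) : HasDerivAt (Gm m) (gm m x) x :=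
  integral_hasDerivAt_right ((contDiff_gm m).continuous.intervalIntegrable _ _)
    ((contDiff_gm m).continuous.stronglyMeasurableAtFilter _ _)
    (contDiff_gm m).continuous.continuousAt

lemma contDiff_Gm (m : ℕ) : ContDiff ℝ ∞ (Gm m) := by
  have hderiv : deriv (Gm m) = gm m := funext fun x => (hasDerivAt_Gm m x).deriv
  rw [contDiff_infty_iff_deriv, hderiv]
  exact ⟨fun x => (hasDerivAt_Gm m x).differentiableAt, contDiff_gm m⟩

lemma Gm_pos (m : ℕ) {x : ℝ} (hx : x ∈ Set.Ioc (-1) 1) : 0 < Gm m x := by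
  refine intervalIntegral_pos_of_pos_on ((contDiff_gm m).continuous.intervalIntegrable _ _)
    (fun t ht => ?_) hx.1
  have ht2 : t ^ 2 < 1 := by nlinarith [ht.1, ht.2.trans_le hx.2]
  exact mul_pos (Cm_pos m) (pow_pos (by linarith) m)

lemma contDiffOn_log_two_mul_Gm (m : ℕ) :
    ContDiffOn ℝ ∞ (fun x => Real.log (2 * Gm m x)) (Set.Ioo (-1) 1) :=
  (contDiff_const.mul (contDiff_Gm m)).contDiffOn.log fun _ hx =>
    (mul_pos two_pos (Gm_pos m (Set.Ioo_subset_Ioc_self hx))).ne'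

/-- The log-likelihood contribution `(μ, λ) ↦ log (2 G_m(λ sin(θ - μ)))` of an observation `θ`. -/
noncomputable def essLogLik (m : ℕ) (θ : ℝ) (q : ℝ × ℝ) : ℝ :=
  Real.log (2 * Gm m (q.2 * Real.sin (θ - q.1)))

lemma essLogLik_eq_comp_sub (m : ℕ) (θ : ℝ) :
    essLogLik m θ = fun q => essLogLik m 0 (q - (θ, 0)) := by
  ext q
  simp [essLogLik, sub_eq_add_neg, add_comm]

lemma essLogLik_periodic (m : ℕ) (θ : ℝ) : Function.Periodic (essLogLik m θ) (2 * π, 0) := by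
  intro q
  simp [essLogLik, sub_add_eq_sub_sub]

lemma contDiffOn_essLogLik (m : ℕ) (θ : ℝ) :
    ContDiffOn ℝ ∞ (essLogLik m θ) (Set.univ ×ˢ Set.Ioo (-1) 1) := by
  refine (contDiffOn_log_two_mul_Gm m).comp (by fun_prop) fun q hq => ?_
  have hle : |q.2 * Real.sin (θ - q.1)| ≤ |q.2| := by
    rw [abs_mul]
    exact mul_le_of_le_one_right (abs_nonneg _) (abs_sin_le_one _)
  exact abs_lt.1 (hle.trans_lt (abs_lt.2 hq.2))

lemma Function.Periodic.iteratedFDeriv {𝕜 E F : Type*} [NontriviallyNormedField 𝕜]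
    [NormedAddCommGroup E] [NormedSpace 𝕜 E] [NormedAddCommGroup F] [NormedSpace 𝕜 F]
    {f : E → F} {a : E} (hf : Function.Periodic f a) (n : ℕ) :
    Function.Periodic (iteratedFDeriv 𝕜 n f) a := fun x => by
  rw [← iteratedFDeriv_comp_add_right, hf.funext]

/-- All third-order partial derivatives of `(μ, λ) ↦ log(2 G_m(λ sin(θ-μ)))` are
uniformly bounded when `λ` is kept away from `±1`. -/
theorem ess_loglik_third_deriv_bounded (m : ℕ) (δ : ℝ) (hδ : δ ∈ Set.Ioo (0 : ℝ) 1) :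
    ∃ B : ℝ, ∀ θ μ lam : ℝ, lam ∈ Set.Icc (-1 + δ) (1 - δ) →
      ‖iteratedFDeriv ℝ 3
          (fun q : ℝ × ℝ => Real.log (2 * Gm m (q.2 * Real.sin (θ - q.1)))) (μ, lam)‖ ≤ B := by
  have hK : Set.Icc 0 (2 * π) ×ˢ Set.Icc (-1 + δ) (1 - δ) ⊆ Set.univ ×ˢ Set.Ioo (-1) 1 :=
    Set.prod_mono (Set.subset_univ _) (Set.Icc_subset_Ioo (by linarith [hδ.1]) (by linarith [hδ.1]))
  obtain ⟨B, hB⟩ := (isCompact_Icc.prod isCompact_Icc).exists_bound_of_continuousOn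
    ((ContinuousOn.continuousOn_iteratedFDeriv (contDiffOn_essLogLik m 0)
      (isOpen_univ.prod isOpen_Ioo) (by exact_mod_cast le_top)).mono hK)
  refine ⟨B, fun θ μ lam hlam => ?_⟩
  have hslice : Function.Periodic (fun x => iteratedFDeriv ℝ 3 (essLogLik m 0) (x, lam)) (2 * π) :=
    fun x => by simpa using ((essLogLik_periodic m 0).iteratedFDeriv 3) (x, lam)
  obtain ⟨x, hx, hxeq⟩ := hslice.exists_mem_Ico₀ two_pi_pos (μ - θ)
  change ‖iteratedFDeriv ℝ 3 (essLogLik m θ) (μ, lam)‖ ≤ B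
  rw [essLogLik_eq_comp_sub, iteratedFDeriv_comp_sub, Prod.mk_sub_mk, sub_zero, hxeq]
  exact hB _ ⟨Set.Ico_subset_Icc_self hx, hlam⟩
end
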